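/- For any affine function v on a nondegenerate tetrahedron K with vertices S_1,...,S_4, the lumped norm is bounded by √5 times the L² norm: (vol(K)/4)·Σ_{i=1}^4 v(S_i)² ≤ 5 ∫_K v² dx. -/

import Mathlib

/-!
The tail sums `(λ₁ + λ₂ + λ₃, λ₂ + λ₃, λ₃)` of the barycentric coordinates map the tetrahedron
affinely onto the ordered simplex `0 ≤ z ≤ y ≤ x ≤ 1`. An affine bijection pushes a Haar measure
to a multiple of Lebesgue measure, and the volume and `∫ v²` scale by the same factor. On the
ordered simplex the moments of monomials are iterated integrals of powers, and expanding `v²`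
in the monomials `1, x, y, z` gives the exact value
`∫_K v² = vol(K) / 20 · (∑ᵢ v(Sᵢ)² + (∑ᵢ v(Sᵢ))²)`, which is at least `vol(K) / 20 · ∑ᵢ v(Sᵢ)²`.
-/

open MeasureTheory Set

theorem setIntegral_prod_dependent {α β E : Type*} [MeasurableSpace α] [MeasurableSpace β]
    {μ : Measure α} {ν : Measure β} [SFinite μ] [SFinite ν] [NormedAddCommGroup E]
    [NormedSpace ℝ E] {a : Set α} {t : α → Set β} (ha : MeasurableSet a)
    (hs : MeasurableSet {p : α × β | p.1 ∈ a ∧ p.2 ∈ t p.1}) {f : α × β → E}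
    (hf : IntegrableOn f {p : α × β | p.1 ∈ a ∧ p.2 ∈ t p.1} (μ.prod ν)) :
    ∫ p in {p : α × β | p.1 ∈ a ∧ p.2 ∈ t p.1}, f p ∂(μ.prod ν) =
      ∫ x in a, ∫ y in t x, f (x, y) ∂ν ∂μ := by
  rw [← integral_indicator hs, integral_prod _ ((integrable_indicator_iff hs).2 hf),
    ← integral_indicator ha]
  congr with x
  by_cases hx : x ∈ a
  · have hfiber : t x = Prod.mk x ⁻¹' {p : α × β | p.1 ∈ a ∧ p.2 ∈ t p.1} := by
      ext y; simp [hx]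
    rw [indicator_of_mem hx, hfiber, ← integral_indicator (measurable_prodMk_left hs)]
    rfl
  · simp [hx]

theorem integral_sq_sum_mul {α ι : Type*} [MeasurableSpace α] {μ : Measure α} [Fintype ι]
    (a : ι → ℝ) (φ : ι → α → ℝ) (hφ : ∀ i j, Integrable (fun x => φ i x * φ j x) μ) :
    ∫ x, (∑ i, a i * φ i x) ^ 2 ∂μ = ∑ i, ∑ j, a i * a j * ∫ x, φ i x * φ j x ∂μ := by
  have hexpand : ∀ x, (∑ i, a i * φ i x) ^ 2 = ∑ i, ∑ j, a i * a j * (φ i x * φ j x) := by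
    intro x
    rw [sq, Finset.sum_mul_sum]
    exact Finset.sum_congr rfl fun i _ => Finset.sum_congr rfl fun j _ => by ring
  simp_rw [hexpand]
  rw [integral_finsetSum _ fun i _ => integrable_finsetSum _ fun j _ => (hφ i j).const_mul _]
  refine Finset.sum_congr rfl fun i _ => ?_
  rw [integral_finsetSum _ fun j _ => (hφ i j).const_mul _]
  simp_rw [integral_const_mul]

theorem AffineEquiv.isAddHaarMeasure_map {E F : Type*} [NormedAddCommGroup E] [NormedSpace ℝ E]
    [MeasurableSpace E] [BorelSpace E] [FiniteDimensional ℝ E] [NormedAddCommGroup F]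
    [NormedSpace ℝ F] [MeasurableSpace F] [BorelSpace F] [FiniteDimensional ℝ F]
    (φ : E ≃ᵃ[ℝ] F) (μ : Measure E) [μ.IsAddHaarMeasure] : (μ.map φ).IsAddHaarMeasure := by
  have hφ : ⇑φ = (· + φ 0) ∘ φ.linear := φ.toAffineMap.decomp
  have hL : Measurable φ.linear := φ.linear.toContinuousLinearEquiv.continuous.measurable
  rw [hφ, ← Measure.map_map (measurable_add_const _) hL, map_add_right_eq_self]
  infer_instance

theorem integral_Icc_pow (n : ℕ) {y : ℝ} (hy : 0 ≤ y) :
    ∫ z in Icc 0 y, z ^ n = y ^ (n + 1) / (n + 1) := by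
  rw [integral_Icc_eq_integral_Ioc, ← intervalIntegral.integral_of_le hy, integral_pow]
  simp

def orderedSimplex₂ (u : ℝ) : Set (ℝ × ℝ) := {q | q.1 ∈ Icc 0 u ∧ q.2 ∈ Icc 0 q.1}

def orderedSimplex₃ : Set (ℝ × ℝ × ℝ) := {p | p.1 ∈ Icc 0 1 ∧ p.2 ∈ orderedSimplex₂ p.1}

theorem isCompact_orderedSimplex₂ (u : ℝ) : IsCompact (orderedSimplex₂ u) := by
  refine (isCompact_Icc (a := (0, 0)) (b := (u, u))).of_isClosed_subset ?_ ?_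
  · simp only [orderedSimplex₂, mem_Icc, ofPred_and]
    refine ((isClosed_le ?_ ?_).inter (isClosed_le ?_ ?_)).inter
      ((isClosed_le ?_ ?_).inter (isClosed_le ?_ ?_)) <;> fun_prop
  · rintro q ⟨⟨h0, hu⟩, hz0, hz⟩
    exact ⟨⟨h0, hz0⟩, hu, hz.trans hu⟩

theorem isCompact_orderedSimplex₃ : IsCompact orderedSimplex₃ := by
  refine (isCompact_Icc (a := (0, 0, 0)) (b := (1, 1, 1))).of_isClosed_subset ?_ ?_
  · simp only [orderedSimplex₃, orderedSimplex₂, mem_Icc, ofPred_and]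
    refine ((isClosed_le ?_ ?_).inter (isClosed_le ?_ ?_)).inter
      (((isClosed_le ?_ ?_).inter (isClosed_le ?_ ?_)).inter
        ((isClosed_le ?_ ?_).inter (isClosed_le ?_ ?_))) <;> fun_prop
  · rintro p ⟨⟨h0, h1⟩, ⟨hy0, hy⟩, hz0, hz⟩
    exact ⟨⟨h0, hy0, hz0⟩, h1, hy.trans h1, hz.trans (hy.trans h1)⟩

theorem integral_orderedSimplex₂_monomial (m n : ℕ) {u : ℝ} (hu : 0 ≤ u) :
    ∫ q in orderedSimplex₂ u, q.1 ^ m * q.2 ^ n = u ^ (m + n + 2) / ((n + 1) * (m + n + 2)) := by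
  have hK := isCompact_orderedSimplex₂ u
  rw [Measure.volume_eq_prod, orderedSimplex₂, setIntegral_prod_dependent measurableSet_Icc
    hK.measurableSet ((Continuous.continuousOn (by fun_prop)).integrableOn_compact hK)]
  calc ∫ y in Icc 0 u, ∫ z in Icc 0 y, y ^ m * z ^ n
      = ∫ y in Icc 0 u, y ^ (m + n + 1) / (n + 1) := by
        refine setIntegral_congr_fun measurableSet_Icc fun y hy => ?_
        simp only [integral_const_mul, integral_Icc_pow n hy.1, pow_succ, pow_add]
        ring
    _ = u ^ (m + n + 2) / ((n + 1) * (m + n + 2)) := by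
        rw [integral_div, integral_Icc_pow _ hu]
        push_cast
        field_simp
        ring

theorem integral_orderedSimplex₃_monomial (l m n : ℕ) :
    ∫ p in orderedSimplex₃, p.1 ^ l * p.2.1 ^ m * p.2.2 ^ n =
      1 / (((n : ℝ) + 1) * (m + n + 2) * (l + m + n + 3)) := by
  have hK := isCompact_orderedSimplex₃
  rw [Measure.volume_eq_prod, orderedSimplex₃, setIntegral_prod_dependent measurableSet_Icc
    hK.measurableSet ((Continuous.continuousOn (by fun_prop)).integrableOn_compact hK)]
  calc ∫ x in Icc (0 : ℝ) 1, ∫ q in orderedSimplex₂ x, x ^ l * q.1 ^ m * q.2 ^ n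
      = ∫ x in Icc (0 : ℝ) 1, x ^ (l + m + n + 2) / (((n : ℝ) + 1) * (m + n + 2)) := by
        refine setIntegral_congr_fun measurableSet_Icc fun x hx => ?_
        simp only [mul_assoc, integral_const_mul, integral_orderedSimplex₂_monomial m n hx.1,
          pow_add]
        ring
    _ = 1 / (((n : ℝ) + 1) * (m + n + 2) * (l + m + n + 3)) := by
        rw [integral_div, integral_Icc_pow _ zero_le_one]
        push_cast
        field_simp
        ring

theorem volume_real_orderedSimplex₃ : volume.real orderedSimplex₃ = 1 / 6 := by
  have h := integral_orderedSimplex₃_monomial 0 0 0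
  simp only [pow_zero, mul_one, setIntegral_const, smul_eq_mul] at h
  rw [h]
  norm_num

theorem integral_sq_orderedSimplex₃ (c : Fin 4 → ℝ) :
    ∫ p in orderedSimplex₃,
        (c 0 + (c 1 - c 0) * p.1 + (c 2 - c 1) * p.2.1 + (c 3 - c 2) * p.2.2) ^ 2 =
      ((∑ i, c i ^ 2) + (∑ i, c i) ^ 2) / 120 := by
  -- the monomials `1, x, y, z`, by exponent triple
  let e : Fin 4 → ℕ × ℕ × ℕ := ![(0, 0, 0), (1, 0, 0), (0, 1, 0), (0, 0, 1)]
  let φ : Fin 4 → ℝ × ℝ × ℝ → ℝ := fun i p =>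
    p.1 ^ (e i).1 * p.2.1 ^ (e i).2.1 * p.2.2 ^ (e i).2.2
  have hφ : ∀ i j p, φ i p * φ j p = p.1 ^ ((e i).1 + (e j).1) *
      p.2.1 ^ ((e i).2.1 + (e j).2.1) * p.2.2 ^ ((e i).2.2 + (e j).2.2) := by
    intro i j p
    simp only [φ, pow_add]
    ring
  have hv : ∀ p : ℝ × ℝ × ℝ,
      c 0 + (c 1 - c 0) * p.1 + (c 2 - c 1) * p.2.1 + (c 3 - c 2) * p.2.2 =
        ∑ i, ![c 0, c 1 - c 0, c 2 - c 1, c 3 - c 2] i * φ i p := by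
    intro p
    simp [Fin.sum_univ_four, φ, e]
  have hint : ∀ i j, Integrable (fun p => φ i p * φ j p) (volume.restrict orderedSimplex₃) :=
    fun i j => (Continuous.continuousOn (by fun_prop)).integrableOn_compact
      isCompact_orderedSimplex₃
  simp_rw [hv]
  rw [integral_sq_sum_mul _ _ hint]
  simp_rw [hφ, integral_orderedSimplex₃_monomial]
  simp only [Fin.sum_univ_four, e, Matrix.cons_val_zero, Matrix.cons_val_one, Matrix.cons_val,
    Nat.cast_add, Nat.cast_one, Nat.cast_zero]
  ring

section

variable {V P : Type*} [AddCommGroup V] [Module ℝ V] [AddTorsor V P]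

namespace AffineBasis

noncomputable def orderedSimplexCoords (b : AffineBasis (Fin 4) ℝ P) : P →ᵃ[ℝ] ℝ × ℝ × ℝ :=
  (b.coord 1 + b.coord 2 + b.coord 3).prod ((b.coord 2 + b.coord 3).prod (b.coord 3))

variable (b : AffineBasis (Fin 4) ℝ P)

theorem orderedSimplexCoords_apply (x : P) : b.orderedSimplexCoords x =
    (b.coord 1 x + b.coord 2 x + b.coord 3 x, b.coord 2 x + b.coord 3 x, b.coord 3 x) := rfl

theorem coord_zero_eq_one_sub (x : P) : b.coord 0 x = 1 - b.coord 1 x - b.coord 2 x - b.coord 3 x := by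
  have := b.sum_coord_apply_eq_one x
  rw [Fin.sum_univ_four] at this
  linarith

theorem orderedSimplexCoords_bijective : Function.Bijective b.orderedSimplexCoords := by
  constructor
  · intro x y hxy
    simp only [orderedSimplexCoords_apply, Prod.mk.injEq] at hxy
    obtain ⟨h1, h2, h3⟩ := hxy
    refine b.ext_elem fun i => ?_
    fin_cases i <;> simp only [Fin.zero_eta, Fin.mk_one, Fin.reduceFinMk, coord_zero_eq_one_sub] <;>
      linarith
  · rintro ⟨x, y, z⟩
    set w : Fin 4 → ℝ := ![1 - x, x - y, y - z, z]
    have hw : ∑ i, w i = 1 := by simp [w, Fin.sum_univ_four]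
    have hcoord : ∀ i, b.coord i (Finset.univ.affineCombination ℝ b w) = w i :=
      fun i => b.coord_apply_combination_of_mem (Finset.mem_univ i) hw
    refine ⟨Finset.univ.affineCombination ℝ b w, ?_⟩
    simp [orderedSimplexCoords_apply, hcoord, w]

theorem orderedSimplexCoords_mem_iff (x : P) :
    b.orderedSimplexCoords x ∈ orderedSimplex₃ ↔ ∀ i, 0 ≤ b.coord i x := by
  simp only [orderedSimplexCoords_apply, orderedSimplex₃, orderedSimplex₂, mem_ofPred_eq, mem_Icc]
  constructor
  · rintro ⟨⟨-, h1⟩, ⟨-, h2⟩, h3, h3'⟩ i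
    fin_cases i <;> simp only [Fin.zero_eta, Fin.mk_one, Fin.reduceFinMk, coord_zero_eq_one_sub] <;>
      linarith
  · intro h
    have h0 := h 0
    have h1 := h 1
    have h2 := h 2
    have h3 := h 3
    rw [coord_zero_eq_one_sub] at h0
    exact ⟨⟨by linarith, by linarith⟩, ⟨by linarith, by linarith⟩, by linarith, by linarith⟩

end AffineBasis

theorem AffineMap.apply_eq_orderedSimplexCoords (b : AffineBasis (Fin 4) ℝ P) (v : P →ᵃ[ℝ] ℝ)
    (x : P) :
    v x = v (b 0) + (v (b 1) - v (b 0)) * (b.orderedSimplexCoords x).1 +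
      (v (b 2) - v (b 1)) * (b.orderedSimplexCoords x).2.1 +
      (v (b 3) - v (b 2)) * (b.orderedSimplexCoords x).2.2 := by
  have hx := Finset.univ.map_affineCombination b _ (b.sum_coord_apply_eq_one x) v
  rw [b.affineCombination_coord_eq_self,
    Finset.univ.affineCombination_eq_linear_combination _ _ (b.sum_coord_apply_eq_one x)] at hx
  rw [hx, Fin.sum_univ_four, b.orderedSimplexCoords_apply, b.coord_zero_eq_one_sub]
  simp only [Function.comp_apply, smul_eq_mul]
  ring

end

theorem integral_sq_convexHull_affineBasis {E : Type*} [NormedAddCommGroup E] [NormedSpace ℝ E]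
    [MeasurableSpace E] [BorelSpace E] [FiniteDimensional ℝ E] (μ : Measure E)
    [μ.IsAddHaarMeasure] (b : AffineBasis (Fin 4) ℝ E) (v : E →ᵃ[ℝ] ℝ) :
    ∫ x in convexHull ℝ (range b), v x ^ 2 ∂μ =
      μ.real (convexHull ℝ (range b)) / 20 * ((∑ i, v (b i) ^ 2) + (∑ i, v (b i)) ^ 2) := by
  set Ψ := AffineEquiv.ofBijective b.orderedSimplexCoords_bijective
  have hΨ : Measurable Ψ :=
    (AffineMap.continuous_of_finiteDimensional b.orderedSimplexCoords).measurable
  have hO := isCompact_orderedSimplex₃.measurableSet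
  have hK : convexHull ℝ (range b) = Ψ ⁻¹' orderedSimplex₃ := by
    ext x
    rw [b.convexHull_eq_nonneg_coord]
    exact (b.orderedSimplexCoords_mem_iff x).symm
  have := Ψ.isAddHaarMeasure_map μ
  have : (volume : Measure (ℝ × ℝ × ℝ)).IsAddHaarMeasure := Measure.prod.instIsAddHaarMeasure _ _
  have hmap := Measure.isAddLeftInvariant_eq_smul (μ.map Ψ) volume
  set k := (μ.map Ψ).addHaarScalarFactor volume
  have hvol : μ.real (convexHull ℝ (range b)) = k * (1 / 6) := by
    rw [hK, ← map_measureReal_apply hΨ hO, hmap, measureReal_nnreal_smul_apply,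
      volume_real_orderedSimplex₃]
  set h : ℝ × ℝ × ℝ → ℝ := fun p => (v (b 0) + (v (b 1) - v (b 0)) * p.1 +
    (v (b 2) - v (b 1)) * p.2.1 + (v (b 3) - v (b 2)) * p.2.2) ^ 2
  have hv : ∀ x, v x ^ 2 = h (Ψ x) := fun x => by
    rw [v.apply_eq_orderedSimplexCoords b x]; rfl
  calc ∫ x in convexHull ℝ (range b), v x ^ 2 ∂μ
      = ∫ x in Ψ ⁻¹' orderedSimplex₃, h (Ψ x) ∂μ := by
        rw [hK]; exact integral_congr_ae (ae_of_all _ hv)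
    _ = ∫ p in orderedSimplex₃, h p ∂(μ.map Ψ) :=
        (setIntegral_map hO (Continuous.aestronglyMeasurable (by fun_prop))
          hΨ.aemeasurable).symm
    _ = k * ∫ p in orderedSimplex₃, h p := by
        rw [hmap, Measure.restrict_smul, integral_smul_nnreal_measure, NNReal.smul_def,
          smul_eq_mul]
    _ = _ := by
        rw [integral_sq_orderedSimplex₃ fun i => v (b i), hvol]
        ring

/-- For an affine function `v` on a nondegenerate tetrahedron `K`,
the lumped (vertex-quadrature) norm is bounded by `√5` times the L² norm:
`(vol(K)/4) Σᵢ v(Sᵢ)² ≤ 5 ∫_K v² dx`. -/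
theorem tetrahedron_lumped_le_five_sq_integral
    (b : AffineBasis (Fin 4) ℝ (EuclideanSpace ℝ (Fin 3)))
    (K : Set (EuclideanSpace ℝ (Fin 3))) (hK : K = convexHull ℝ (Set.range ⇑b))
    (v : EuclideanSpace ℝ (Fin 3) →ᵃ[ℝ] ℝ) :
    (volume K).toReal / 4 * ∑ i, (v (b i)) ^ 2 ≤ 5 * ∫ x in K, (v x) ^ 2 := by
  rw [hK, integral_sq_convexHull_affineBasis volume b v, ← measureReal_def]
  have hcross := mul_nonneg (measureReal_nonneg (μ := volume) (s := convexHull ℝ (range b)))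
    (sq_nonneg (∑ i, v (b i)))
  linarith
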